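/- Let (Y_u)_{u≥0} be random variables satisfying P(|Y_u| ≥ z) ≤ δ^{-1}e^{-δz} for all u, z ≥ 0, and let (s_k)_{k=0}^{n} be real numbers with δk - M ≤ s_k for all k, where M > 1. Then Σ_{k=1}^{n-1} P(Y_{s_k} ≥ 2δ^{-1} log⁺ s_k + m - 1) ≤ C·M·e^{-δm} for a constant C depending only on δ, uniformly in n and m ≥ 1. -/

import Mathlib

open MeasureTheory ProbabilityTheory Real Set

noncomputable section

/-- A standard one-dimensional Brownian motion started at `0` under `P`:
measurable in time, a.s. continuous paths starting at `0`, Gaussian increments,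
and independent increments. -/
def IsBrownianMotion {Ω : Type*} [MeasurableSpace Ω] (P : Measure Ω)
    (W : ℝ → Ω → ℝ) : Prop :=
  (∀ u : ℝ, Measurable (W u)) ∧
  (∀ᵐ ω ∂P, W 0 ω = 0 ∧ Continuous fun u => W u ω) ∧
  (∀ s t : ℝ, 0 ≤ s → s ≤ t →
    P.map (fun ω => W t ω - W s ω) = gaussianReal 0 (Real.toNNReal (t - s))) ∧
  (∀ n : ℕ, ∀ t : Fin (n + 1) → ℝ, Monotone t → 0 ≤ t 0 →
    iIndepFun (m := fun _ => Real.measurableSpace)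
      (fun i : Fin n => fun ω => W (t i.succ) ω - W (t i.castSucc) ω) P)

/-- A standard Brownian motion started at `x`. -/
def IsBrownianMotionFrom {Ω : Type*} [MeasurableSpace Ω] (P : Measure Ω)
    (W : ℝ → Ω → ℝ) (x : ℝ) : Prop :=
  IsBrownianMotion P (fun u ω => W u ω - x)

/-- A Brownian bridge from `x` at time `0` to `y` at time `t` under `P`:
a.s. continuous paths with the correct endpoints, Gaussian one-dimensional
marginals with the bridge mean and variance, and the bridge covariance. -/
def IsBrownianBridge {Ω : Type*} [MeasurableSpace Ω] (P : Measure Ω)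
    (W : ℝ → Ω → ℝ) (x y t : ℝ) : Prop :=
  (∀ u : ℝ, Measurable (W u)) ∧
  (∀ᵐ ω ∂P, W 0 ω = x ∧ W t ω = y ∧ ContinuousOn (fun u => W u ω) (Set.Icc 0 t)) ∧
  (∀ u ∈ Set.Icc 0 t, P.map (W u) =
    gaussianReal (x + (y - x) * u / t) (Real.toNNReal (u * (t - u) / t))) ∧
  (∀ u v : ℝ, 0 ≤ u → u ≤ v → v ≤ t →
    ∫ ω, (W u ω - (x + (y - x) * u / t)) * (W v ω - (x + (y - x) * v / t)) ∂P
      = u * (t - v) / t)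


lemma tele_sum {δ : ℝ} (hδ0 : 0 < δ) (hδ2 : δ ≤ 2) (N : ℕ) :
    ∑ j ∈ Finset.range N, ((1 + δ * j)⁻¹) ^ 2 ≤ 1 + δ⁻¹ ^ 2 := by
  have key : ∀ K : ℕ, ∑ j ∈ Finset.range (K + 1), ((1 + δ * j)⁻¹) ^ 2
      ≤ 1 + δ⁻¹ ^ 2 * (1 - 1 / (K + 1)) := by
    intro K
    induction K with
    | zero => simp
    | succ K ih =>
      rw [Finset.sum_range_succ]
      have hK1 : (0:ℝ) < (K:ℝ) + 1 := by positivity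
      have hK2 : (0:ℝ) < (K:ℝ) + 2 := by positivity
      have hpos : (0:ℝ) < 1 + δ * ((K:ℝ) + 1) := by positivity
      have hterm : ((1 + δ * ((K + 1 : ℕ) : ℝ))⁻¹) ^ 2
          ≤ δ⁻¹ ^ 2 * (1 / ((K:ℝ) + 1) - 1 / ((K:ℝ) + 2)) := by
        push_cast
        have hkey : δ ^ 2 * (((K:ℝ) + 1) * ((K:ℝ) + 2)) ≤ (1 + δ * ((K:ℝ) + 1)) ^ 2 := by
          nlinarith [hδ0.le, sq_nonneg (δ * ((K:ℝ)+1))]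
        have e1 : ((1 + δ * ((K:ℝ) + 1))⁻¹) ^ 2 = ((1 + δ * ((K:ℝ) + 1)) ^ 2)⁻¹ := by
          rw [inv_pow]
        have e2 : δ⁻¹ ^ 2 * (1 / ((K:ℝ) + 1) - 1 / ((K:ℝ) + 2))
            = (δ ^ 2 * (((K:ℝ) + 1) * ((K:ℝ) + 2)))⁻¹ := by
          rw [div_sub_div _ _ (ne_of_gt hK1) (ne_of_gt hK2)]
          field_simp
          ring
        rw [e1, e2]
        gcongr
      have := add_le_add ih hterm
      refine this.trans (le_of_eq ?_)
      push_cast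
      ring
  rcases N with _ | K
  · simp; positivity
  · refine (key K).trans ?_
    have : (0:ℝ) ≤ 1 / ((K:ℝ) + 1) := by positivity
    nlinarith [sq_nonneg δ⁻¹]

lemma sum_inv_sq_bound {δ M : ℝ} (hδ0 : 0 < δ) (hδ2 : δ ≤ 2) (hM : 1 < M)
    (n : ℕ) (s : ℕ → ℝ) (hs : ∀ k, k ≤ n → δ * k - M ≤ s k) :
    ∑ k ∈ Finset.Ico 1 n, ((max (s k) 1)⁻¹) ^ 2 ≤ (2 / δ + 2 + δ⁻¹ ^ 2) * M := by
  set K0 : ℕ := ⌈(M + 1) / δ⌉₊ with hK0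
  set N : ℕ := max n K0 with hN
  have hf : ∀ k : ℕ, k ≤ n → ((max (s k) 1)⁻¹) ^ 2 ≤ ((max (δ * k - M) 1)⁻¹) ^ 2 := by
    intro k hk
    have h1 : (0:ℝ) < max (δ * k - M) 1 := lt_of_lt_of_le one_pos (le_max_right _ _)
    gcongr
    exact hs k hk
  have step1 : ∑ k ∈ Finset.Ico 1 n, ((max (s k) 1)⁻¹) ^ 2
      ≤ ∑ k ∈ Finset.Ico 1 n, ((max (δ * k - M) 1)⁻¹) ^ 2 := by
    refine Finset.sum_le_sum fun k hk => hf k ?_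
    exact le_of_lt (Finset.mem_Ico.mp hk).2
  have step2 : ∑ k ∈ Finset.Ico 1 n, ((max (δ * k - M) 1)⁻¹) ^ 2
      ≤ ∑ k ∈ Finset.range N, ((max (δ * k - M) 1)⁻¹) ^ 2 := by
    refine Finset.sum_le_sum_of_subset_of_nonneg ?_ (fun _ _ _ => by positivity)
    intro k hk
    rw [Finset.mem_Ico] at hk
    rw [Finset.mem_range]
    exact lt_of_lt_of_le hk.2 (le_max_left _ _)
  have hKN : K0 ≤ N := le_max_right _ _
  have split : ∑ k ∈ Finset.range N, ((max (δ * k - M) 1)⁻¹) ^ 2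
      = ∑ k ∈ Finset.range K0, ((max (δ * k - M) 1)⁻¹) ^ 2
        + ∑ k ∈ Finset.Ico K0 N, ((max (δ * k - M) 1)⁻¹) ^ 2 := by
    simp only [Finset.range_eq_Ico]
    exact (Finset.sum_Ico_consecutive _ (Nat.zero_le _) hKN).symm
  have head : ∑ k ∈ Finset.range K0, ((max (δ * k - M) 1)⁻¹) ^ 2 ≤ (K0 : ℝ) := by
    have : ∀ k ∈ Finset.range K0, ((max (δ * k - M) 1)⁻¹) ^ 2 ≤ 1 := by
      intro k _
      have h1 : (1:ℝ) ≤ max (δ * k - M) 1 := le_max_right _ _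
      have h2 : (max (δ * k - M) 1)⁻¹ ≤ 1 := by
        rw [inv_le_one_iff₀]; right; exact h1
      have h3 : (0:ℝ) ≤ (max (δ * k - M) 1)⁻¹ := by positivity
      nlinarith
    calc ∑ k ∈ Finset.range K0, ((max (δ * k - M) 1)⁻¹) ^ 2
        ≤ ∑ _k ∈ Finset.range K0, (1:ℝ) := Finset.sum_le_sum this
      _ = (K0 : ℝ) := by simp
  have hK0lb : M + 1 ≤ δ * K0 := by
    have := Nat.le_ceil ((M + 1) / δ)
    calc M + 1 = (M+1)/δ * δ := by field_simp
      _ ≤ (K0 : ℝ) * δ := by gcongr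
      _ = δ * K0 := by ring
  have tail : ∑ k ∈ Finset.Ico K0 N, ((max (δ * k - M) 1)⁻¹) ^ 2 ≤ 1 + δ⁻¹ ^ 2 := by
    rw [Finset.sum_Ico_eq_sum_range]
    have hb : ∀ j ∈ Finset.range (N - K0),
        ((max (δ * ((K0 : ℕ) + j : ℕ) - M) 1)⁻¹) ^ 2 ≤ ((1 + δ * j)⁻¹) ^ 2 := by
      intro j _
      have h1 : (0:ℝ) < 1 + δ * j := by positivity
      have h2 : 1 + δ * j ≤ max (δ * ((K0 : ℕ) + j : ℕ) - M) 1 := by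
        refine le_trans ?_ (le_max_left _ _)
        push_cast
        have : δ * ((K0:ℝ) + j) - M = (δ * K0 - M) + δ * j := by ring
        rw [this]
        linarith
      gcongr
    calc ∑ j ∈ Finset.range (N - K0), ((max (δ * ((K0 : ℕ) + j : ℕ) - M) 1)⁻¹) ^ 2
        ≤ ∑ j ∈ Finset.range (N - K0), ((1 + δ * j)⁻¹) ^ 2 := Finset.sum_le_sum hb
      _ ≤ 1 + δ⁻¹ ^ 2 := tele_sum hδ0 hδ2 _
  have hK0ub : (K0 : ℝ) ≤ (M + 1) / δ + 1 := by
    have h0 : (0:ℝ) ≤ (M + 1) / δ := by positivity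
    exact le_of_lt (Nat.ceil_lt_add_one h0)
  have final : (K0 : ℝ) + (1 + δ⁻¹ ^ 2) ≤ (2 / δ + 2 + δ⁻¹ ^ 2) * M := by
    have hM1 : (1:ℝ) ≤ M := hM.le
    have h1 : (M + 1) / δ ≤ 2 * M / δ := by gcongr; linarith
    have h2 : (0:ℝ) ≤ δ⁻¹ ^ 2 := by positivity
    have h3 : 2 * M / δ = 2 / δ * M := by ring
    nlinarith [h1]
  calc ∑ k ∈ Finset.Ico 1 n, ((max (s k) 1)⁻¹) ^ 2
      ≤ ∑ k ∈ Finset.range N, ((max (δ * k - M) 1)⁻¹) ^ 2 := step1.trans step2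
    _ = _ := split
    _ ≤ (K0 : ℝ) + (1 + δ⁻¹ ^ 2) := add_le_add head tail
    _ ≤ _ := final

lemma exp_maxlog {x : ℝ} (hx : 0 ≤ x) :
    Real.exp (-(2 * max (Real.log x) 0)) = ((max x 1)⁻¹) ^ 2 := by
  have h1 : max (Real.log x) 0 = Real.log (max x 1) := by
    rcases le_total x 1 with h | h
    · rw [max_eq_right h, Real.log_one, max_eq_right (Real.log_nonpos hx h)]
    · rw [max_eq_left h, max_eq_left (Real.log_nonneg h)]
  rw [h1]
  have hpos : (0:ℝ) < max x 1 := lt_of_lt_of_le one_pos (le_max_right _ _)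
  rw [show (2 : ℝ) * Real.log (max x 1) = ((2:ℕ) : ℝ) * Real.log (max x 1) by norm_num,
    Real.exp_neg, Real.exp_nat_mul, Real.exp_log hpos, inv_pow]

/-- Union-bound estimate for the decorations: if `P(|Y_u| ≥ z) ≤ δ⁻¹ e^{-δ z}` and
`δ k - M ≤ s_k`, then `∑_{k=1}^{n-1} P(Y_{s_k} ≥ 2 δ⁻¹ log⁺ s_k + m - 1) ≤ C M e^{-δ m}`
with `C` depending only on `δ`, uniformly in `n` and `m ≥ 1`. -/
theorem decoration_tail_sum (δ : ℝ) (hδ : δ ∈ Set.Ioo (0 : ℝ) (1/2)) :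
    ∃ C > (0 : ℝ), ∀ (Ω : Type) [MeasurableSpace Ω] (P : Measure Ω)
      (Y : ℝ → Ω → ℝ) (M : ℝ) (n : ℕ) (s : ℕ → ℝ) (m : ℝ),
      IsProbabilityMeasure P →
      (∀ u z : ℝ, 0 ≤ u → 0 ≤ z →
        P {ω | z ≤ |Y u ω|} ≤ ENNReal.ofReal (δ⁻¹ * Real.exp (-δ * z))) →
      1 < M → (∀ k : ℕ, k ≤ n → 0 ≤ s k ∧ δ * k - M ≤ s k) → 1 ≤ m →
      ∑ k ∈ Finset.Ico 1 n,
          P {ω | 2 * δ⁻¹ * max (Real.log (s k)) 0 + m - 1 ≤ Y (s k) ω} ≤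
        ENNReal.ofReal (C * M * Real.exp (-δ * m)) := by
  obtain ⟨hδ0, hδh⟩ := hδ
  refine ⟨δ⁻¹ * Real.exp δ * (2 / δ + 2 + δ⁻¹ ^ 2), by positivity, ?_⟩
  intro Ω _ P Y M n s m hP htail hM hs hm
  have hδ2 : δ ≤ 2 := by linarith
  set c : ℝ := δ⁻¹ * Real.exp δ * Real.exp (-δ * m) with hc
  have hc0 : 0 ≤ c := by positivity
  have hterm : ∀ k ∈ Finset.Ico 1 n,
      P {ω | 2 * δ⁻¹ * max (Real.log (s k)) 0 + m - 1 ≤ Y (s k) ω}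
        ≤ ENNReal.ofReal (c * ((max (s k) 1)⁻¹) ^ 2) := by
    intro k hk
    have hk' : k ≤ n := le_of_lt (Finset.mem_Ico.mp hk).2
    obtain ⟨hs0, _⟩ := hs k hk'
    set z : ℝ := 2 * δ⁻¹ * max (Real.log (s k)) 0 + m - 1 with hzdef
    have hz : 0 ≤ z := by
      have h1 : 0 ≤ 2 * δ⁻¹ * max (Real.log (s k)) 0 := by positivity
      simp only [hzdef]; linarith
    have h1 : P {ω | z ≤ Y (s k) ω} ≤ P {ω | z ≤ |Y (s k) ω|} :=
      measure_mono (fun ω h => le_trans (a := z) h (le_abs_self _))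
    refine (h1.trans (htail _ _ hs0 hz)).trans (le_of_eq ?_)
    congr 1
    have hexp : -δ * z = (-(2 * max (Real.log (s k)) 0)) + (δ + -δ * m) := by
      simp only [hzdef]
      field_simp
      ring
    rw [hexp, Real.exp_add, Real.exp_add, exp_maxlog hs0, hc]
    ring
  calc ∑ k ∈ Finset.Ico 1 n,
        P {ω | 2 * δ⁻¹ * max (Real.log (s k)) 0 + m - 1 ≤ Y (s k) ω}
      ≤ ∑ k ∈ Finset.Ico 1 n, ENNReal.ofReal (c * ((max (s k) 1)⁻¹) ^ 2) :=
        Finset.sum_le_sum hterm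
    _ = ENNReal.ofReal (∑ k ∈ Finset.Ico 1 n, c * ((max (s k) 1)⁻¹) ^ 2) := by
        rw [ENNReal.ofReal_sum_of_nonneg]
        intro k _
        positivity
    _ ≤ ENNReal.ofReal (δ⁻¹ * Real.exp δ * (2 / δ + 2 + δ⁻¹ ^ 2) * M * Real.exp (-δ * m)) := by
        apply ENNReal.ofReal_le_ofReal
        rw [← Finset.mul_sum]
        have hsum : ∑ k ∈ Finset.Ico 1 n, ((max (s k) 1)⁻¹) ^ 2
            ≤ (2 / δ + 2 + δ⁻¹ ^ 2) * M :=
          sum_inv_sq_bound hδ0 hδ2 hM n s (fun k hk => (hs k hk).2)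
        calc c * ∑ k ∈ Finset.Ico 1 n, ((max (s k) 1)⁻¹) ^ 2
            ≤ c * ((2 / δ + 2 + δ⁻¹ ^ 2) * M) := by gcongr
          _ = δ⁻¹ * Real.exp δ * (2 / δ + 2 + δ⁻¹ ^ 2) * M * Real.exp (-δ * m) := by
              rw [hc]; ring
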